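/- arXiv:2106.07017 — 6 statements merged into one kernel-verified Lean document; each statement's English description precedes it below -/
import Mathlib

section
/- If w is a string of length m with smallest period p ≤ m/2, then for any two occurrences of w in a string S starting at positions i < j, either j - i is a multiple of p with j - i ≤ m - p, or j - i > m/2. -/
/-- `w` (a string of length `m`, 0-indexed) occurs in `S` at position `i`. -/
def occursAt {α : Type*} (S w : ℕ → α) (m i : ℕ) : Prop :=
  ∀ t < m, S (i + t) = w t

/-- `p` is a period of the length-`m` string `w`. -/
def hasPeriod {α : Type*} (w : ℕ → α) (m p : ℕ) : Prop :=
  ∀ t, t + p < m → w t = w (t + p)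

/-!
The distance `d = j - i` between two occurrences of `w` is itself a period of `w`. If `2d ≤ m`,
minimality gives `p ≤ d`, so `p + d ≤ m` and the Fine–Wilf periodicity lemma makes `gcd p d` a
period; minimality again forces `gcd p d = p`, i.e. `p ∣ d`, and `d ≤ m - p` follows from
`p ≤ d ≤ m / 2`.
-/

section

variable {α : Type*} {w : ℕ → α} {m p q : ℕ}

theorem hasPeriod_iff_list_hasPeriod :
    hasPeriod w m p ↔ ((List.range m).map w).HasPeriod p := by
  rw [List.hasPeriod_iff_getElem?]
  simp only [List.length_map, List.length_range, List.getElem?_map]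
  refine forall_congr' fun t => ⟨fun h ht => ?_, fun h ht => ?_⟩
  · rw [List.getElem?_range (by omega), List.getElem?_range (by omega), Option.map_some,
      Option.map_some, h (by omega)]
  · simpa [List.getElem?_range, show t < m by omega, ht] using h (by omega)

theorem hasPeriod.gcd (hp : hasPeriod w m p) (hq : hasPeriod w m q)
    (hm : p + q - Nat.gcd p q ≤ m) : hasPeriod w m (Nat.gcd p q) := by
  rw [hasPeriod_iff_list_hasPeriod] at *
  exact hp.gcd hq (by simpa using hm)

theorem hasPeriod_sub_of_occursAt {S : ℕ → α} {i j : ℕ} (hi : occursAt S w m i)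
    (hj : occursAt S w m j) (hij : i ≤ j) : hasPeriod w m (j - i) := by
  intro t ht
  rw [← hi (t + (j - i)) ht, ← hj t (by omega)]
  congr 1
  omega

end

theorem periodic_occurrence_distances_general {α : Type*} (S w : ℕ → α) (m p i j : ℕ)
    (hp1 : 1 ≤ p)
    (hper : hasPeriod w m p)
    (hmin : ∀ q, 1 ≤ q → q < p → ¬ hasPeriod w m q)
    (hi : occursAt S w m i) (hj : occursAt S w m j) (hij : i < j) :
    (p ∣ (j - i) ∧ j - i ≤ m - p) ∨ 2 * (j - i) > m := by
  refine or_iff_not_imp_right.mpr fun hsmall => ?_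
  have hd : hasPeriod w m (j - i) := hasPeriod_sub_of_occursAt hi hj hij.le
  have hpd : p ≤ j - i := not_lt.mp fun h => hmin _ (by omega) h hd
  have hgcd_le : Nat.gcd p (j - i) ≤ p := Nat.gcd_le_left _ (by omega)
  have hgcd : Nat.gcd p (j - i) = p := by
    by_contra hne
    exact hmin _ (Nat.gcd_pos_of_pos_left _ (by omega)) (by omega) (hper.gcd hd (by omega))
  exact ⟨hgcd ▸ Nat.gcd_dvd_right p (j - i), by omega⟩

/-- If `w` has smallest period `p ≤ m/2`, then any two occurrences at `i < j`
satisfy: either `j - i` is a multiple of `p` with `j - i ≤ m - p`, or `j - i > m/2`. -/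
theorem periodic_occurrence_distances {α : Type*} (S w : ℕ → α) (m p i j : ℕ)
    (hp1 : 1 ≤ p) (hp2 : 2 * p ≤ m)
    (hper : hasPeriod w m p)
    (hmin : ∀ q, 1 ≤ q → q < p → ¬ hasPeriod w m q)
    (hi : occursAt S w m i) (hj : occursAt S w m j) (hij : i < j) :
    (p ∣ (j - i) ∧ j - i ≤ m - p) ∨ 2 * (j - i) > m :=
  periodic_occurrence_distances_general S w m p i j hp1 hper hmin hi hj hij
end

section
/- Let w be a string of length m with period p = per(w) ≤ m/2, and suppose w occurs in S at positions i and i + p. Then S[i .. i + m + p - 1] has period p. -/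
theorem occurrences_merge_into_run_general {α : Type*} (S w : ℕ → α) (m p i : ℕ)
    (hi : occursAt S w m i) (hip : occursAt S w m (i + p)) :
    ∀ t, t + p < m + p → S (i + t) = S (i + t + p) := by
  intro t ht
  have htm : t < m := by omega
  rw [hi t htm, add_right_comm, hip t htm]

/-- If `w` of length `m` has smallest period `p ≤ m/2` and occurs at `i` and `i + p`,
then the substring `S[i .. i + m + p - 1]` has period `p`. -/
theorem occurrences_merge_into_run {α : Type*} (S w : ℕ → α) (m p i : ℕ)
    (hp1 : 1 ≤ p) (hp2 : 2 * p ≤ m)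
    (hper : hasPeriod w m p)
    (hmin : ∀ q, 1 ≤ q → q < p → ¬ hasPeriod w m q)
    (hi : occursAt S w m i) (hip : occursAt S w m (i + p)) :
    ∀ t, t + p < m + p → S (i + t) = S (i + t + p) :=
  occurrences_merge_into_run_general S w m p i hi hip
end

section
/- Let S be a string of length n, let A = {s_j = s + j·d : 0 ≤ j ≤ k-1} be an arithmetic progression of positions all contained in a run of S with period d (meaning S[s .. s_{k-1} + d - 1] has period d), and let i be any position. Let l_p = LCP(i, s), the length of the longest common prefix of the suffixes S[i..] and S[s..]. If l_p < d, then LCP(i, s_j) = l_p for every j with 0 ≤ j ≤ k-2. -/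
/-!
Within the run, the `d` characters following `s_j` repeat those following `s`, and
`l_p < d` means that the first `l_p + 1` characters after `s` already contain the whole
common prefix with `i` together with the mismatch that ends it.
-/

/-- `ℓ` is the length of the longest common prefix of the suffixes of `S`
starting at `x` and at `y`. -/
def isLCP {α : Type*} (S : ℕ → α) (x y ℓ : ℕ) : Prop :=
  (∀ t < ℓ, S (x + t) = S (y + t)) ∧ S (x + ℓ) ≠ S (y + ℓ)

section

variable {α : Type*}

theorem isLCP.of_eq_right {S : ℕ → α} {x y z ℓ : ℕ} (h : isLCP S x y ℓ)
    (hyz : ∀ t ≤ ℓ, S (y + t) = S (z + t)) : isLCP S x z ℓ :=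
  ⟨fun t ht => (h.1 t ht).trans (hyz t ht.le), by rw [← hyz ℓ le_rfl]; exact h.2⟩

theorem eq_of_periodic_prefix {S : ℕ → α} {s d n : ℕ}
    (hper : ∀ t < n, S (s + t) = S (s + t + d)) :
    ∀ {j t : ℕ}, j * d + t < n + d → S (s + j * d + t) = S (s + t)
  | 0, _, _ => by simp
  | j + 1, t, hjt => by
    have hlt : j * d + t < n := by rw [Nat.succ_mul] at hjt; omega
    calc S (s + (j + 1) * d + t) = S (s + (j * d + t) + d) := by rw [Nat.succ_mul]; ring_nf
      _ = S (s + (j * d + t)) := (hper _ hlt).symm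
      _ = S (s + t) := by rw [← add_assoc]; exact eq_of_periodic_prefix hper (by omega)

end

theorem lcp_in_run_small_general {α : Type*} (S : ℕ → α) (s d k i lp : ℕ)
    (hrun : ∀ t < (k - 1) * d, S (s + t) = S (s + t + d))
    (hlcp : isLCP S i s lp) (hsmall : lp < d) :
    ∀ j, j + 1 < k → isLCP S i (s + j * d) lp := by
  intro j hj
  refine hlcp.of_eq_right fun t ht => (eq_of_periodic_prefix hrun ?_).symm
  calc j * d + t < j * d + d := by omega
    _ = (j + 1) * d := (Nat.succ_mul j d).symm
    _ ≤ (k - 1) * d + d := le_add_right (Nat.mul_le_mul_right d (by omega))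

/-- If the positions `s_j = s + j·d`, `0 ≤ j ≤ k-1`, lie in a run with period `d`
(i.e. `S[s .. s + (k-1)d + d - 1]` has period `d`) and `l_p = LCP(i,s) < d`, then
`LCP(i, s_j) = l_p` for every `j ≤ k - 2`. -/
theorem lcp_in_run_small {α : Type*} (S : ℕ → α) (s d k i lp : ℕ)
    (hd : 1 ≤ d) (hk : 1 ≤ k)
    (hrun : ∀ t < (k - 1) * d, S (s + t) = S (s + t + d))
    (hlcp : isLCP S i s lp) (hsmall : lp < d) :
    ∀ j, j + 1 < k → isLCP S i (s + j * d) lp :=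
  lcp_in_run_small_general S s d k i lp hrun hlcp hsmall
end

section
/- Merging LCP-partitioned lists: let w_x be a string, and for strings v, w define them lexicographically ordered with lcp(v,w) denoting the longest common prefix length. Suppose strings u, v satisfy lcp(u, w_x) = a, lcp(v, w_x) = b with a < b, and u < w_x lexicographically. Then lcp(u, v) = a and u < v lexicographically. Symmetrically, if u > w_x and v's lcp with w_x is larger, then u > v. -/
/-! Since `v` agrees with `w` on a strictly longer prefix than `u` does, `v` agrees with `w` at
the position `a` where `u` first leaves `w`. So `u` and `v` first differ at `a` too, and they
compare there exactly as `u` and `w` do. -/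

/-- The length of the longest common prefix of two lists. -/
def lcpLen {α : Type*} [DecidableEq α] : List α → List α → ℕ
  | a :: u, b :: v => if a = b then lcpLen u v + 1 else 0
  | _, _ => 0

section Lcp

variable {α : Type*} [DecidableEq α]

@[simp]
theorem lcpLen_nil_left (v : List α) : lcpLen [] v = 0 := by
  cases v <;> rfl

@[simp]
theorem lcpLen_nil_right (u : List α) : lcpLen u [] = 0 := by
  cases u <;> rfl

theorem lcpLen_cons_cons (x y : α) (u v : List α) :
    lcpLen (x :: u) (y :: v) = if x = y then lcpLen u v + 1 else 0 := rfl

theorem lcpLen_cons_self (x : α) (u v : List α) :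
    lcpLen (x :: u) (x :: v) = lcpLen u v + 1 := by
  simp [lcpLen_cons_cons]

theorem exists_eq_cons_of_lcpLen_pos {v : List α} {y : α} {w : List α}
    (h : 0 < lcpLen v (y :: w)) : ∃ v', v = y :: v' := by
  match v with
  | [] => simp at h
  | z :: v' =>
    by_cases hzy : z = y
    · exact ⟨v', hzy ▸ rfl⟩
    · simp [lcpLen_cons_cons, hzy] at h

/-- The ultrametric property of the common prefix length, in the form of an isosceles triangle. -/
theorem lcpLen_eq_of_lcpLen_lt {u v w : List α} (h : lcpLen u w < lcpLen v w) :
    lcpLen u v = lcpLen u w := by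
  induction u generalizing v w with
  | nil => simp
  | cons x u ih =>
    match w with
    | [] => simp at h
    | y :: w =>
      obtain ⟨v, rfl⟩ := exists_eq_cons_of_lcpLen_pos (Nat.zero_lt_of_lt h)
      by_cases hxy : x = y
      · subst hxy
        simp only [lcpLen_cons_self, Nat.add_lt_add_iff_right, Nat.add_right_cancel_iff] at h ⊢
        exact ih h
      · simp [lcpLen_cons_cons, hxy]

theorem List.Lex.of_lcpLen_lt_left {r : α → α → Prop} {u v w : List α}
    (huw : List.Lex r u w) (h : lcpLen u w < lcpLen v w) : List.Lex r u v := by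
  induction huw generalizing v with
  | nil =>
    obtain ⟨v, rfl⟩ := exists_eq_cons_of_lcpLen_pos h
    exact .nil
  | @cons x u w _ ih =>
    obtain ⟨v, rfl⟩ := exists_eq_cons_of_lcpLen_pos (Nat.zero_lt_of_lt h)
    rw [lcpLen_cons_self, lcpLen_cons_self, Nat.add_lt_add_iff_right] at h
    exact .cons (ih h)
  | rel hxy =>
    obtain ⟨v, rfl⟩ := exists_eq_cons_of_lcpLen_pos (Nat.zero_lt_of_lt h)
    exact .rel hxy

theorem List.Lex.of_lcpLen_lt_right {r : α → α → Prop} {u v w : List α}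
    (hwu : List.Lex r w u) (h : lcpLen u w < lcpLen v w) : List.Lex r v u := by
  induction hwu generalizing v with
  | nil => simp at h
  | @cons x w u _ ih =>
    obtain ⟨v, rfl⟩ := exists_eq_cons_of_lcpLen_pos (Nat.zero_lt_of_lt h)
    rw [lcpLen_cons_self, lcpLen_cons_self, Nat.add_lt_add_iff_right] at h
    exact .cons (ih h)
  | rel hyx =>
    obtain ⟨v, rfl⟩ := exists_eq_cons_of_lcpLen_pos (Nat.zero_lt_of_lt h)
    exact .rel hyx

end Lcp

/-- Merging LCP-partitioned lists: if `lcp(u,w) = a < b = lcp(v,w)`, then: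
if `u < w` lexicographically then `lcp(u,v) = a` and `u < v`; symmetrically if
`u > w` then `lcp(u,v) = a` and `u > v`. -/
theorem lcp_partition_merge {α : Type*} [LinearOrder α]
    (u v w : List α) (a b : ℕ)
    (ha : lcpLen u w = a) (hb : lcpLen v w = b) (hab : a < b) :
    (List.Lex (· < ·) u w → lcpLen u v = a ∧ List.Lex (· < ·) u v) ∧
    (List.Lex (· < ·) w u → lcpLen u v = a ∧ List.Lex (· < ·) v u) := by
  subst ha hb
  exact ⟨fun huw => ⟨lcpLen_eq_of_lcpLen_lt hab, huw.of_lcpLen_lt_left hab⟩,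
    fun hwu => ⟨lcpLen_eq_of_lcpLen_lt hab, hwu.of_lcpLen_lt_right hab⟩⟩
end

section
/- Correctness of the stairs-update data structure reporting: let t, p ≥ 1, and let U_1,...,U_u be increasing stairs updates, each given by a triple (a_r, b_r, p) with 1 ≤ a_r ≤ b_r ≤ t. Define the target counter values C_i = Σ_r f_r(i), where f_r(i) = ⌈(i - a_r + 1)/p⌉ if a_r ≤ i ≤ b_r and 0 otherwise. Then the sequential algorithm that maintains an array Remainders[0..p-1] and a running sum C — incrementing Remainders[i mod p] by the number of updates starting at i, adding Remainders[i mod p] to C at each step i, reporting C as C_i, and after reporting at i = b_r subtracting ⌈(b_r - a_r + 1)/p⌉ from C and 1 from Remainders[a_r mod p] — reports exactly the values C_i for i = 1,...,t. -/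
/-!
After positions `1, …, i` have been processed, `C` is the total value at `i` of the updates
still open (those with `i < b`), and `Remainders[r]` counts the open updates with `a ≡ r (mod p)`.
A stair `⌈(i - a + 1)/p⌉` grows by one from `i` to `i + 1` exactly when `i + 1 ≡ a (mod p)`,
so once the updates starting at `i + 1` are registered, adding `Remainders[(i + 1) mod p]` turns `C`
into `C_{i+1}`; removing the updates ending at `i + 1` then restores the invariant, and the
truncated subtractions are exact because each subtracted amount is a summand of what it is
subtracted from.
-/

/-- Ceiling division `⌈q / p⌉` on naturals. -/
def ceilDiv (q p : ℕ) : ℕ := (q + p - 1) / p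

/-- The state of the stairs-update data structure: the `Remainders` array
(indexed by residues mod `p`) and the running sum `C`. -/
structure StairsState where
  rem : ℕ → ℕ
  C : ℕ

/-- One step of the reporting algorithm at position `i`: add the number of
updates starting at `i` to `Remainders[i mod p]`, add `Remainders[i mod p]` to
`C` and report it, then for each update `(a,b)` ending at `i` subtract
`⌈(b-a+1)/p⌉` from `C` and `1` from `Remainders[a mod p]`. -/
def stairsStep (p : ℕ) (U : List (ℕ × ℕ)) (st : StairsState) (i : ℕ) :
    StairsState × ℕ :=
  let starts := (U.filter (fun u => u.1 = i)).length
  let rem1 : ℕ → ℕ := fun r => if r = i % p then st.rem r + starts else st.rem r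
  let C1 := st.C + rem1 (i % p)
  let ends := U.filter (fun u => u.2 = i)
  let rem2 : ℕ → ℕ := fun r => rem1 r - (ends.filter (fun u => u.1 % p = r)).length
  let C2 := C1 - (ends.map (fun u => ceilDiv (u.2 - u.1 + 1) p)).sum
  (⟨rem2, C2⟩, C1)

/-- The state after sequentially processing positions `1, …, i`. -/
def stairsRun (p : ℕ) (U : List (ℕ × ℕ)) : ℕ → StairsState
  | 0 => ⟨fun _ => 0, 0⟩
  | i + 1 => (stairsStep p U (stairsRun p U i) (i + 1)).1

/-- The value reported at position `i ≥ 1`. -/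
def stairsReport (p : ℕ) (U : List (ℕ × ℕ)) (i : ℕ) : ℕ :=
  (stairsStep p U (stairsRun p U (i - 1)) i).2

theorem List.sum_map_filter_eq_sum_map_ite {α M : Type*} [AddCommMonoid M] (l : List α)
    (q : α → Bool) (f : α → M) :
    ((l.filter q).map f).sum = (l.map fun a => if q a then f a else 0).sum := by
  simp [List.sum_map_ite]

theorem List.length_filter_eq_sum_map_ite {α : Type*} (l : List α) (q : α → Bool) :
    (l.filter q).length = (l.map fun a => if q a then 1 else 0).sum := by
  rw [← List.sum_map_filter_eq_sum_map_ite]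
  simp

section
variable {p : ℕ}

theorem ceilDiv_succ (hp : 0 < p) (q : ℕ) :
    ceilDiv (q + 1) p = ceilDiv q p + if p ∣ q then 1 else 0 := by
  rw [ceilDiv, ceilDiv, show q + 1 + p - 1 = q + p - 1 + 1 by omega, Nat.succ_div,
    show q + p - 1 + 1 = q + p by omega]
  simp only [Nat.dvd_add_self_right]

theorem ceilDiv_one_left (hp : 0 < p) : ceilDiv 1 p = 1 := by
  rw [ceilDiv, Nat.add_sub_cancel_left, Nat.div_self hp]

/-- The paper's `f_r(i)` for the update `u = (a_r, b_r)`. -/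
def stairsValue (p i : ℕ) (u : ℕ × ℕ) : ℕ :=
  if u.1 ≤ i ∧ i ≤ u.2 then ceilDiv (i - u.1 + 1) p else 0

theorem stairsValue_succ (hp : 0 < p) {a b : ℕ} (hab : a ≤ b) (i : ℕ) :
    stairsValue p (i + 1) (a, b)
      = (if i < b then stairsValue p i (a, b) else 0)
        + if a ≤ i + 1 ∧ i + 1 ≤ b ∧ a % p = (i + 1) % p then 1 else 0 := by
  unfold stairsValue
  dsimp only
  rcases lt_trichotomy a (i + 1) with ha | rfl | ha
  · have hdvd : a % p = (i + 1) % p ↔ p ∣ i - a + 1 := by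
      rw [show i - a + 1 = i + 1 - a by omega]
      exact Nat.modEq_iff_dvd' ha.le
    rw [show i + 1 - a + 1 = i - a + 1 + 1 by omega, ceilDiv_succ hp]
    simp only [← hdvd]
    split_ifs <;> omega
  · simp [ceilDiv_one_left hp, hab]
  · simp [show ¬ a ≤ i by omega, show ¬ a ≤ i + 1 by omega]

/-- The invariant: the state after processing positions `1, …, i`. -/
def stairsSpecState (p : ℕ) (U : List (ℕ × ℕ)) (i : ℕ) : StairsState where
  rem r := (U.map fun u => if u.1 ≤ i ∧ i < u.2 ∧ u.1 % p = r then 1 else 0).sum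
  C := (U.map fun u => if i < u.2 then stairsValue p i u else 0).sum

variable {U : List (ℕ × ℕ)}

theorem stairsSpecState_rem_add_starts (hU : ∀ u ∈ U, u.1 ≤ u.2) (i r : ℕ) :
    (if r = (i + 1) % p then
        (stairsSpecState p U i).rem r + (U.filter fun u => u.1 = i + 1).length
      else (stairsSpecState p U i).rem r)
      = (U.map fun u => if u.1 ≤ i + 1 ∧ i + 1 ≤ u.2 ∧ u.1 % p = r then 1 else 0).sum := by
  have hstarts : (if r = (i + 1) % p then (U.filter fun u => u.1 = i + 1).length else 0)
      = (U.map fun u => if u.1 = i + 1 ∧ u.1 % p = r then 1 else 0).sum := by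
    rw [List.length_filter_eq_sum_map_ite]
    split_ifs with hr
    · refine congrArg List.sum (List.map_congr_left fun u _ => ?_)
      by_cases ha : u.1 = i + 1 <;> simp [ha, hr]
    · refine (List.sum_eq_zero fun x hx => ?_).symm
      obtain ⟨u, -, rfl⟩ := List.mem_map.mp hx
      by_cases ha : u.1 = i + 1 <;> simp [ha, Ne.symm hr]
  rw [show ∀ x y : ℕ, (if r = (i + 1) % p then x + y else x)
      = x + if r = (i + 1) % p then y else 0 by intros; split_ifs <;> rfl,
    hstarts, stairsSpecState, ← List.sum_map_add]
  refine congrArg List.sum (List.map_congr_left fun ⟨a, b⟩ hu => ?_)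
  have hab := hU _ hu
  dsimp only at hab ⊢
  by_cases ha : a = i + 1
  · subst ha
    split_ifs <;> omega
  · split_ifs <;> omega

theorem sum_sub_ends_eq_stairsSpecState_C (hU : ∀ u ∈ U, u.1 ≤ u.2) (n : ℕ) :
    (U.map (stairsValue p n)).sum
        - ((U.filter fun u => u.2 = n).map fun u => ceilDiv (u.2 - u.1 + 1) p).sum
      = (stairsSpecState p U n).C := by
  refine Nat.sub_eq_of_eq_add ?_
  rw [List.sum_map_filter_eq_sum_map_ite, stairsSpecState, ← List.sum_map_add]
  refine congrArg List.sum (List.map_congr_left fun ⟨a, b⟩ hu => ?_)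
  have hab := hU _ hu
  dsimp only at hab ⊢
  by_cases hb : b = n
  · subst hb
    simp [stairsValue, hab]
  · simp only [stairsValue, decide_eq_true_eq]
    split_ifs <;> omega

theorem sum_sub_ends_eq_stairsSpecState_rem (hU : ∀ u ∈ U, u.1 ≤ u.2) (n r : ℕ) :
    (U.map fun u => if u.1 ≤ n ∧ n ≤ u.2 ∧ u.1 % p = r then 1 else 0).sum
        - ((U.filter fun u => u.2 = n).filter fun u => u.1 % p = r).length
      = (stairsSpecState p U n).rem r := by
  refine Nat.sub_eq_of_eq_add ?_
  rw [List.length_filter_eq_sum_map_ite, List.sum_map_filter_eq_sum_map_ite, stairsSpecState,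
    ← List.sum_map_add]
  refine congrArg List.sum (List.map_congr_left fun ⟨a, b⟩ hu => ?_)
  have hab := hU _ hu
  simp only [decide_eq_true_eq] at hab ⊢
  split_ifs <;> omega

theorem stairsStep_stairsSpecState (hp : 0 < p) (hU : ∀ u ∈ U, u.1 ≤ u.2) (i : ℕ) :
    stairsStep p U (stairsSpecState p U i) (i + 1)
      = (stairsSpecState p U (i + 1), (U.map (stairsValue p (i + 1))).sum) := by
  have hrem := stairsSpecState_rem_add_starts (p := p) hU i
  have hreport : (stairsSpecState p U i).C
        + ((stairsSpecState p U i).rem ((i + 1) % p) + (U.filter fun u => u.1 = i + 1).length)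
      = (U.map (stairsValue p (i + 1))).sum := by
    have hcur := hrem ((i + 1) % p)
    rw [if_pos rfl] at hcur
    rw [hcur, stairsSpecState, ← List.sum_map_add]
    exact congrArg List.sum
      (List.map_congr_left fun ⟨a, b⟩ hu => (stairsValue_succ hp (hU _ hu) i).symm)
  simp only [stairsStep, ite_true, hrem, hreport, sum_sub_ends_eq_stairsSpecState_C hU,
    sum_sub_ends_eq_stairsSpecState_rem hU]

theorem stairsSpecState_zero (hU : ∀ u ∈ U, 1 ≤ u.1) :
    stairsSpecState p U 0 = ⟨fun _ => 0, 0⟩ := by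
  have hclosed : ∀ u ∈ U, ¬ u.1 ≤ 0 := fun u hu => by have := hU u hu; omega
  simp only [stairsSpecState, stairsValue, StairsState.mk.injEq]
  refine ⟨funext fun r => List.sum_eq_zero ?_, List.sum_eq_zero ?_⟩ <;>
  · intro x hx
    obtain ⟨u, hu, rfl⟩ := List.mem_map.mp hx
    simp [hclosed u hu]

theorem stairsRun_eq_stairsSpecState (hp : 0 < p) (hU : ∀ u ∈ U, 1 ≤ u.1 ∧ u.1 ≤ u.2) :
    ∀ i, stairsRun p U i = stairsSpecState p U i
  | 0 => (stairsSpecState_zero fun u hu => (hU u hu).1).symm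
  | i + 1 => by
    rw [stairsRun, stairsRun_eq_stairsSpecState hp hU i,
      stairsStep_stairsSpecState hp (fun u hu => (hU u hu).2) i]

theorem stairsReport_succ (hp : 0 < p) (hU : ∀ u ∈ U, 1 ≤ u.1 ∧ u.1 ≤ u.2) (i : ℕ) :
    stairsReport p U (i + 1) = (U.map (stairsValue p (i + 1))).sum := by
  rw [stairsReport, Nat.add_sub_cancel, stairsRun_eq_stairsSpecState hp hU,
    stairsStep_stairsSpecState hp (fun u hu => (hU u hu).2)]

end

/-- Correctness of the stairs-update data structure: for increasing stairs
updates `(a_r, b_r, p)` with `1 ≤ a_r ≤ b_r ≤ t` and common step width `p`,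
the sequential algorithm reports at each `1 ≤ i ≤ t` exactly
`C_i = Σ_r ⌈(i - a_r + 1)/p⌉` over updates with `a_r ≤ i ≤ b_r`. -/
theorem stairs_reporting_correct (t p : ℕ) (hp : 1 ≤ p)
    (U : List (ℕ × ℕ)) (hU : ∀ u ∈ U, 1 ≤ u.1 ∧ u.1 ≤ u.2 ∧ u.2 ≤ t) :
    ∀ i, 1 ≤ i → i ≤ t →
      stairsReport p U i
        = (U.map (fun u =>
            if u.1 ≤ i ∧ i ≤ u.2 then ceilDiv (i - u.1 + 1) p else 0)).sum := by
  intro i hi _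
  obtain ⟨j, rfl⟩ : ∃ j, i = j + 1 := ⟨i - 1, by omega⟩
  exact stairsReport_succ hp (fun u hu => ⟨(hU u hu).1, (hU u hu).2.1⟩) j
end

section
/- Sliding-window update decomposition: fix a step width p and a window [x, y] slid k times, i.e., counter C_t is to be increased by the number of indices j ∈ {0,...,k-1} with x + j·p ≤ t ≤ y + j·p. This total effect equals the sum of: (1) an increasing stairs update (x, x + (k-1)p - 1, p) adding ⌈(t - x + 1)/p⌉ on its span; (2) a negative increasing stairs update (y+1, y + (k-1)p, p) subtracting ⌈(t - y)/p⌉ on its span; and (3) an interval increment adding k on [x + (k-1)p, y + (k-1)p]. That is, for every t, #{j ∈ [0,k-1] : x + jp ≤ t ≤ y + jp} equals the sum of the contributions of these three updates at t. -/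
/-!
With `A = ⌊(t - x) / p⌋` and `B = ⌈(t - y) / p⌉`, the copy `j` covers `t` exactly when
`B ≤ j ≤ A`, and `x ≤ y` gives `B ≤ A + 1`. Hence the count is
`#{j ∈ [0, k) : j ≤ A} - #{j ∈ [0, k) : j < B}`, the difference of `A + 1` and `B` each clamped
to `[0, k]`. Below saturation these are the two stairs (`A + 1 = ⌈(t - x + 1) / p⌉`), and the two
saturated values `k` combine into the interval increment.
-/

open Finset

namespace Int

variable {p : ℤ}

theorem add_mul_le_iff_le_ediv (hp : 0 < p) {x t j : ℤ} :
    x + j * p ≤ t ↔ j ≤ (t - x) / p := by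
  rw [Int.le_ediv_iff_mul_le hp, le_sub_iff_add_le']

/-- `(t - y - 1 + p) / p` is `⌈(t - y) / p⌉`. -/
theorem le_add_mul_iff_ediv_le (hp : 0 < p) {y t j : ℤ} :
    t ≤ y + j * p ↔ (t - y - 1 + p) / p ≤ j := by
  rw [← Int.lt_add_one_iff (a := (t - y - 1 + p) / p), Int.ediv_lt_iff_lt_mul hp,
    add_mul, one_mul]
  constructor <;> intro h <;> linarith

end Int

theorem card_filter_Icc_le_and_le {A B k : ℤ} (hBA : B ≤ A + 1) (hk : 0 ≤ k) :
    (((Icc (0 : ℤ) (k - 1)).filter (fun j => j ≤ A ∧ B ≤ j)).card : ℤ)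
      = (if 0 ≤ A ∧ A < k - 1 then A + 1 else 0) - (if 0 < B ∧ B ≤ k - 1 then B else 0)
        + (if k - 1 ≤ A ∧ B ≤ k - 1 then k else 0) := by
  have hIcc : (Icc (0 : ℤ) (k - 1)).filter (fun j => j ≤ A ∧ B ≤ j)
      = Icc (max 0 B) (min (k - 1) A) := by
    ext j
    simp only [mem_filter, mem_Icc]
    omega
  rw [hIcc, Int.card_Icc]
  split_ifs <;> omega

/-- Sliding-window update decomposition: sliding the window `[x,y]` `k` times
with step `p` (the `j`-th copy covering `[x + jp, y + jp]`) has, at every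
counter index `t`, the same total effect as the sum of an increasing stairs
update `(x, x+(k-1)p-1, p)`, a negative increasing stairs update
`(y+1, y+(k-1)p, p)`, and an interval increment of `k` on
`[x+(k-1)p, y+(k-1)p]`. -/
theorem sliding_window_decomposition (x y p k : ℤ)
    (hp : 1 ≤ p) (hxy : x ≤ y) (hk : 1 ≤ k) (t : ℤ) :
    (((Finset.Icc (0 : ℤ) (k - 1)).filter
        (fun j => x + j * p ≤ t ∧ t ≤ y + j * p)).card : ℤ)
      = (if x ≤ t ∧ t ≤ x + (k - 1) * p - 1 then (t - x + p) / p else 0)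
        - (if y + 1 ≤ t ∧ t ≤ y + (k - 1) * p then (t - y - 1 + p) / p else 0)
        + (if x + (k - 1) * p ≤ t ∧ t ≤ y + (k - 1) * p then k else 0) := by
  have hp0 : 0 < p := hp
  set A := (t - x) / p
  set B := (t - y - 1 + p) / p
  have hx (j : ℤ) : x + j * p ≤ t ↔ j ≤ A := Int.add_mul_le_iff_le_ediv hp0
  have hy (j : ℤ) : t ≤ y + j * p ↔ B ≤ j := Int.le_add_mul_iff_ediv_le hp0
  have hBA : B ≤ A + 1 := by
    have hlt : y + (B - 1) * p < t := not_le.1 fun h => by linarith [(hy _).1 h]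
    linarith [(hx (B - 1)).1 (by linarith)]
  have h0A : x ≤ t ↔ 0 ≤ A := by simpa using hx 0
  have hAk : t ≤ x + (k - 1) * p - 1 ↔ A < k - 1 := by rw [← not_le, ← hx]; omega
  have hB0 : y + 1 ≤ t ↔ 0 < B := by simpa [Int.add_one_le_iff] using (hy 0).not
  have hstairs : (t - x + p) / p = A + 1 := by
    rw [← Int.add_mul_ediv_right _ _ hp0.ne', one_mul]
  rw [filter_congr fun j _ => and_congr (hx j) (hy j), hstairs]
  simp only [h0A, hAk, hB0, hy, hx]
  exact card_filter_Icc_le_and_le hBA (by omega)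
end
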